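/- arXiv:2505.15532 — 2 statements merged into one kernel-verified Lean document; each statement's English description precedes it below -/
import Mathlib

section
/- For f ∈ H¹(ℝ²) ∩ C_c^∞(ℝ²), the anisotropic Ladyzhenskaya-type inequality holds: ‖f‖_{L^∞_{x₁} L²_{x₂}} ≤ C ‖f‖_{L²}^{1/2} ‖∂₁ f‖_{L²}^{1/2}, where ‖f‖_{L^∞_{x₁} L²_{x₂}} = sup_{x₁} (∫_ℝ |f(x₁,x₂)|² dx₂)^{1/2}. -/
open MeasureTheory

/-- Partial derivative in the first spatial variable. -/
noncomputable def d1 (f : ℝ × ℝ → ℝ) : ℝ × ℝ → ℝ := fun p => deriv (fun s => f (s, p.2)) p.1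

/-- L² norm of a function on ℝ². -/
noncomputable def L2n (f : ℝ × ℝ → ℝ) : ℝ := (∫ p : ℝ × ℝ, (f p) ^ 2) ^ ((1 : ℝ)/2)

section aux

variable {f : ℝ × ℝ → ℝ}

lemma isometry_mk_right (y : ℝ) : Isometry (fun s : ℝ => (s, y)) := by
  intro a b
  simp [Prod.edist_eq]

lemma isometry_mk_left (x : ℝ) : Isometry (fun y : ℝ => (x, y)) := by
  intro a b
  simp [Prod.edist_eq]

lemma slice_support_right (h : HasCompactSupport f) (y : ℝ) :
    HasCompactSupport (fun s : ℝ => f (s, y)) :=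
  h.comp_isClosedEmbedding (isometry_mk_right y).isClosedEmbedding

lemma slice_support_left (h : HasCompactSupport f) (x : ℝ) :
    HasCompactSupport (fun y : ℝ => f (x, y)) :=
  h.comp_isClosedEmbedding (isometry_mk_left x).isClosedEmbedding

lemma rpow_two_abs (x : ℝ) : |x| ^ (2:ℝ) = x ^ 2 := by
  rw [show (2:ℝ) = ((2:ℕ):ℝ) by norm_num, Real.rpow_natCast, sq_abs]

end aux

/-- Anisotropic Ladyzhenskaya-type inequality:
`‖f‖_{L^∞_{x₁}L²_{x₂}} ≤ C ‖f‖_{L²}^{1/2} ‖∂₁f‖_{L²}^{1/2}`. -/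
theorem anisotropic_Linfty_L2 :
    ∃ C : ℝ, 0 < C ∧ ∀ f : ℝ × ℝ → ℝ, ContDiff ℝ (⊤ : ℕ∞) f → HasCompactSupport f →
      ∀ x₁ : ℝ, (∫ y : ℝ, (f (x₁, y)) ^ 2) ^ ((1 : ℝ)/2)
        ≤ C * L2n f ^ ((1 : ℝ)/2) * L2n (d1 f) ^ ((1 : ℝ)/2) := by
  refine ⟨2, by norm_num, ?_⟩
  intro f hf hsupp x₁
  set D : ℝ × ℝ → ℝ := fun p => fderiv ℝ f p (1, 0) with hD_def
  -- derivative of slices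
  have hder : ∀ x y : ℝ, HasDerivAt (fun s => f (s, y)) (D (x, y)) x := by
    intro x y
    have h1 : HasDerivAt (fun s : ℝ => (s, y)) ((1:ℝ), (0:ℝ)) x :=
      (hasDerivAt_id x).prodMk (hasDerivAt_const x y)
    exact ((hf.differentiable (by simp) (x, y)).hasFDerivAt.comp_hasDerivAt x h1)
  have hd1 : d1 f = D := by
    funext p
    exact (hder p.1 p.2).deriv
  have hDcont : Continuous D := (hf.continuous_fderiv (by simp)).clm_apply continuous_const
  have hDsupp : HasCompactSupport D := hsupp.fderiv_apply ℝ (1, 0)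
  -- the product function G
  set G : ℝ × ℝ → ℝ := fun p => 2 * f p * D p with hG_def
  have hGcont : Continuous G := (continuous_const.mul hf.continuous).mul hDcont
  have hGsupp : HasCompactSupport G := hDsupp.mul_left
  have hGint : Integrable G := hGcont.integrable_of_hasCompactSupport hGsupp
  -- slices of G in the first variable
  have hGslice : ∀ y : ℝ, Integrable (fun s => G (s, y)) := by
    intro y
    exact (hGcont.comp (continuous_id.prodMk continuous_const)).integrable_of_hasCompactSupport
      (hGsupp.comp_isClosedEmbedding (isometry_mk_right y).isClosedEmbedding)
  -- FTC on each vertical line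
  have key : ∀ y : ℝ, (f (x₁, y)) ^ 2 = - ∫ s in Set.Ioi x₁, G (s, y) := by
    intro y
    have hsm : ContDiff ℝ 1 (fun s : ℝ => f (s, y) ^ 2) :=
      ((hf.comp (contDiff_id.prodMk contDiff_const)).of_le (by simp)).pow 2
    have hcs : HasCompactSupport (fun s : ℝ => f (s, y) ^ 2) :=
      (slice_support_right hsupp y).comp_left (g := fun t : ℝ => t ^ 2) (by simp)
    have h1 := hcs.integral_Ioi_deriv_eq hsm x₁
    have h2 : (deriv fun s : ℝ => f (s, y) ^ 2) = fun s => G (s, y) := by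
      funext s
      have := ((hder s y).pow 2).deriv
      simpa [Pi.pow_def, hG_def, pow_one, mul_comm, mul_assoc, mul_left_comm] using this
    rw [h2] at h1
    linarith
  -- pointwise bound
  have hGabs_slice : ∀ y : ℝ, Integrable (fun s => |G (s, y)|) := fun y => (hGslice y).abs
  have hb : ∀ y : ℝ, (f (x₁, y)) ^ 2 ≤ ∫ s : ℝ, |G (s, y)| := by
    intro y
    rw [key y]
    calc - ∫ s in Set.Ioi x₁, G (s, y) ≤ |∫ s in Set.Ioi x₁, G (s, y)| := neg_le_abs _
      _ ≤ ∫ s in Set.Ioi x₁, |G (s, y)| := by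
          simpa [Real.norm_eq_abs] using
            norm_integral_le_integral_norm (μ := volume.restrict (Set.Ioi x₁))
              (fun s => G (s, y))
      _ ≤ ∫ s : ℝ, |G (s, y)| :=
          setIntegral_le_integral (hGabs_slice y)
            (Filter.Eventually.of_forall fun s => abs_nonneg _)
  -- integrate in y
  have hGabs_int : Integrable (fun p : ℝ × ℝ => |G p|) := hGint.abs
  have hGabs_int' : Integrable (fun p : ℝ × ℝ => |G p|) (volume.prod volume) := by
    rwa [← MeasureTheory.Measure.volume_eq_prod]
  have hmarg : Integrable (fun y : ℝ => ∫ s : ℝ, |G (s, y)|) := by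
    have := hGabs_int'.integral_prod_right
    simpa using this
  have hslice_int : Integrable (fun y : ℝ => (f (x₁, y)) ^ 2) := by
    refine Continuous.integrable_of_hasCompactSupport ?_ ?_
    · exact (hf.continuous.comp (continuous_const.prodMk continuous_id)).pow 2
    · exact (slice_support_left hsupp x₁).comp_left (g := fun t : ℝ => t ^ 2) (by simp)
  have main1 : ∫ y : ℝ, (f (x₁, y)) ^ 2 ≤ ∫ y : ℝ, ∫ s : ℝ, |G (s, y)| :=
    integral_mono hslice_int hmarg hb
  have main2 : ∫ y : ℝ, ∫ s : ℝ, |G (s, y)| = ∫ p : ℝ × ℝ, |G p| := by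
    rw [MeasureTheory.Measure.volume_eq_prod, integral_prod_symm _ hGabs_int']
  -- Cauchy-Schwarz
  have habsf : Integrable (fun p : ℝ × ℝ => |f p|) :=
    (hf.continuous.integrable_of_hasCompactSupport hsupp).abs
  have hmemf : MemLp (fun p : ℝ × ℝ => |f p|) (ENNReal.ofReal 2) :=
    (hf.continuous.abs).memLp_of_hasCompactSupport hsupp.abs
  have hmemD : MemLp (fun p : ℝ × ℝ => |D p|) (ENNReal.ofReal 2) :=
    (hDcont.abs).memLp_of_hasCompactSupport hDsupp.abs
  have hCS : ∫ p : ℝ × ℝ, |f p| * |D p|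
      ≤ (∫ p : ℝ × ℝ, |f p| ^ (2:ℝ)) ^ ((1:ℝ)/2) * (∫ p : ℝ × ℝ, |D p| ^ (2:ℝ)) ^ ((1:ℝ)/2) :=
    integral_mul_le_Lp_mul_Lq_of_nonneg ⟨by norm_num, by norm_num, by norm_num⟩
      (Filter.Eventually.of_forall fun p => abs_nonneg _)
      (Filter.Eventually.of_forall fun p => abs_nonneg _) hmemf hmemD
  have hrw1 : (∫ p : ℝ × ℝ, |f p| ^ (2:ℝ)) = ∫ p : ℝ × ℝ, (f p) ^ 2 := by
    congr 1; funext p; exact rpow_two_abs _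
  have hrw2 : (∫ p : ℝ × ℝ, |D p| ^ (2:ℝ)) = ∫ p : ℝ × ℝ, (D p) ^ 2 := by
    congr 1; funext p; exact rpow_two_abs _
  have hCS' : ∫ p : ℝ × ℝ, |f p| * |D p| ≤ L2n f * L2n (d1 f) := by
    rw [hrw1, hrw2] at hCS
    simpa [L2n, hd1] using hCS
  have main3 : ∫ p : ℝ × ℝ, |G p| = 2 * ∫ p : ℝ × ℝ, |f p| * |D p| := by
    rw [← integral_const_mul]
    congr 1; funext p
    rw [hG_def]
    simp [abs_mul, mul_assoc]
  -- conclude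
  have hAnn : (0:ℝ) ≤ ∫ y : ℝ, (f (x₁, y)) ^ 2 := integral_nonneg fun y => sq_nonneg _
  have ha : (0:ℝ) ≤ L2n f := Real.rpow_nonneg (integral_nonneg fun p => sq_nonneg _) _
  have hbn : (0:ℝ) ≤ L2n (d1 f) := Real.rpow_nonneg (integral_nonneg fun p => sq_nonneg _) _
  have hprod_nonneg : (0:ℝ) ≤ ∫ p : ℝ × ℝ, |f p| * |D p| :=
    integral_nonneg fun p => mul_nonneg (abs_nonneg _) (abs_nonneg _)
  have hA2 : ∫ y : ℝ, (f (x₁, y)) ^ 2 ≤ 2 * (L2n f * L2n (d1 f)) := by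
    calc ∫ y : ℝ, (f (x₁, y)) ^ 2 ≤ ∫ p : ℝ × ℝ, |G p| := main2 ▸ main1
      _ = 2 * ∫ p : ℝ × ℝ, |f p| * |D p| := main3
      _ ≤ 2 * (L2n f * L2n (d1 f)) := by linarith
  have step : (∫ y : ℝ, (f (x₁, y)) ^ 2) ^ ((1:ℝ)/2)
      ≤ (2 * (L2n f * L2n (d1 f))) ^ ((1:ℝ)/2) :=
    Real.rpow_le_rpow hAnn hA2 (by norm_num)
  have expand : (2 * (L2n f * L2n (d1 f))) ^ ((1:ℝ)/2)
      = (2:ℝ) ^ ((1:ℝ)/2) * (L2n f ^ ((1:ℝ)/2) * L2n (d1 f) ^ ((1:ℝ)/2)) := by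
    rw [Real.mul_rpow (by norm_num) (mul_nonneg ha hbn), Real.mul_rpow ha hbn]
  have h2half : (2:ℝ) ^ ((1:ℝ)/2) ≤ 2 := by
    have := Real.rpow_le_rpow_of_exponent_le (x := (2:ℝ)) one_le_two
      (y := (1:ℝ)/2) (z := 1) (by norm_num)
    simpa using this
  calc (∫ y : ℝ, (f (x₁, y)) ^ 2) ^ ((1:ℝ)/2)
      ≤ (2 * (L2n f * L2n (d1 f))) ^ ((1:ℝ)/2) := step
    _ = (2:ℝ) ^ ((1:ℝ)/2) * (L2n f ^ ((1:ℝ)/2) * L2n (d1 f) ^ ((1:ℝ)/2)) := expand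
    _ ≤ 2 * (L2n f ^ ((1:ℝ)/2) * L2n (d1 f) ^ ((1:ℝ)/2)) := by
        apply mul_le_mul_of_nonneg_right h2half
        exact mul_nonneg (Real.rpow_nonneg ha _) (Real.rpow_nonneg hbn _)
    _ = 2 * L2n f ^ ((1:ℝ)/2) * L2n (d1 f) ^ ((1:ℝ)/2) := by ring
end

section
/- For f ∈ C_c^∞(ℝ²), the anisotropic L^∞ inequality holds: ‖f‖_{L^∞(ℝ²)} ≤ C ‖f‖_{L²}^{1/4} ‖∂₁ f‖_{L²}^{1/4} ‖∂₂ f‖_{L²}^{1/4} ‖∂₁∂₂ f‖_{L²}^{1/4}. -/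
open MeasureTheory

/-- Partial derivative in the second spatial variable. -/
noncomputable def d2 (f : ℝ × ℝ → ℝ) : ℝ × ℝ → ℝ := fun p => deriv (fun s => f (p.1, s)) p.2

section Aux

/-- Cauchy–Schwarz for integrals. -/
lemma aniso_cs {α : Type*} [MeasurableSpace α] {μ : Measure α} {u v : α → ℝ}
    (hu : MemLp u 2 μ) (hv : MemLp v 2 μ) :
    ∫ a, |u a| * |v a| ∂μ ≤
      Real.sqrt (∫ a, u a ^ 2 ∂μ) * Real.sqrt (∫ a, v a ^ 2 ∂μ) := by
  have hpq : Real.HolderConjugate 2 2 := by rw [Real.holderConjugate_iff]; norm_num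
  have h2 : ENNReal.ofReal (2:ℝ) = 2 := by norm_num
  have := MeasureTheory.integral_mul_norm_le_Lp_mul_Lq (μ := μ) hpq
    (h2 ▸ hu) (h2 ▸ hv)
  simp only [Real.norm_eq_abs] at this
  calc ∫ a, |u a| * |v a| ∂μ
      ≤ (∫ a, |u a| ^ (2:ℝ) ∂μ) ^ ((1:ℝ)/2) * (∫ a, |v a| ^ (2:ℝ) ∂μ) ^ ((1:ℝ)/2) := by
        simpa using this
    _ = Real.sqrt (∫ a, u a ^ 2 ∂μ) * Real.sqrt (∫ a, v a ^ 2 ∂μ) := by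
        congr 1
        · rw [Real.sqrt_eq_rpow]; congr 1; apply integral_congr_ae; filter_upwards with a
          rw [show ((2:ℝ)) = ((2:ℕ):ℝ) by norm_num, Real.rpow_natCast, sq_abs]
        · rw [Real.sqrt_eq_rpow]; congr 1; apply integral_congr_ae; filter_upwards with a
          rw [show ((2:ℝ)) = ((2:ℕ):ℝ) by norm_num, Real.rpow_natCast, sq_abs]

/-- 1D: square of a smooth compactly supported function is bounded by `∫ |(g²)'|`. -/
lemma aniso_key1d {g : ℝ → ℝ} (hg : ContDiff ℝ (⊤ : ℕ∞) g) (hs : HasCompactSupport g) (x : ℝ) :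
    g x ^ 2 ≤ ∫ t, 2 * |g t| * |deriv g t| := by
  have hgc : Continuous g := hg.continuous
  have hg' : Continuous (deriv g) := hg.continuous_deriv (by simp)
  set D : ℝ → ℝ := fun t => 2 * g t * deriv g t with hD
  have hder : ∀ t, HasDerivAt (fun u => g u ^ 2) (D t) t := by
    intro t
    have := ((hg.differentiable (by simp) t).hasDerivAt).pow 2
    simp [hD, mul_comm, mul_assoc, mul_left_comm] at this ⊢
    exact this
  have hDc : Continuous D := by fun_prop
  have hDsupp : HasCompactSupport D := by
    apply hs.mono
    intro t ht
    simp only [Function.mem_support, hD] at ht ⊢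
    intro h0; apply ht; rw [h0]; ring
  have hDint : Integrable D := hDc.integrable_of_hasCompactSupport hDsupp
  obtain ⟨R, hR⟩ := hs.isBounded.subset_closedBall 0
  set a : ℝ := min x (-(|R| + 1)) with ha
  have hax : a ≤ x := min_le_left _ _
  have hga : g a = 0 := by
    apply image_eq_zero_of_notMem_tsupport
    intro hmem
    have := hR hmem
    rw [Real.closedBall_eq_Icc] at this
    have h1 : a ≤ -(|R| + 1) := min_le_right _ _
    have h2 : 0 - R ≤ a := this.1
    have := le_abs_self R
    linarith
  have hfc : ∀ t ∈ Set.uIcc a x, DifferentiableAt ℝ (fun u => g u ^ 2) t :=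
    fun t _ => (hder t).differentiableAt
  have hderiv_eq : deriv (fun u => g u ^ 2) = D := funext fun t => (hder t).deriv
  have hII : IntervalIntegrable (deriv (fun u => g u ^ 2)) volume a x := by
    rw [hderiv_eq]; exact hDint.intervalIntegrable
  have hftc := intervalIntegral.integral_deriv_eq_sub hfc hII
  rw [hderiv_eq, hga] at hftc
  have h1 : g x ^ 2 = ∫ t in a..x, D t := by rw [hftc]; ring
  rw [h1]
  calc ∫ t in a..x, D t ≤ |∫ t in a..x, D t| := le_abs_self _
    _ ≤ ∫ t in a..x, |D t| := intervalIntegral.abs_integral_le_integral_abs hax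
    _ = ∫ t in Set.Ioc a x, |D t| := intervalIntegral.integral_of_le hax
    _ ≤ ∫ t, |D t| := setIntegral_le_integral hDint.abs
        (Filter.Eventually.of_forall fun t => abs_nonneg _)
    _ = ∫ t, 2 * |g t| * |deriv g t| := by
        apply integral_congr_ae; filter_upwards with t
        rw [hD]; rw [abs_mul, abs_mul, abs_two]

variable {f : ℝ × ℝ → ℝ}

lemma aniso_hasDerivAt_d1 (hf : Differentiable ℝ f) (p : ℝ × ℝ) :
    HasDerivAt (fun s => f (s, p.2)) (fderiv ℝ f p (1, 0)) p.1 := by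
  have hl : HasDerivAt (fun s : ℝ => (s, p.2)) ((1 : ℝ), (0 : ℝ)) p.1 :=
    (hasDerivAt_id p.1).prodMk (hasDerivAt_const p.1 p.2)
  have := ((hf p).hasFDerivAt).comp_hasDerivAt p.1 (by simpa using hl)
  exact this

lemma aniso_hasDerivAt_d2 (hf : Differentiable ℝ f) (p : ℝ × ℝ) :
    HasDerivAt (fun t => f (p.1, t)) (fderiv ℝ f p (0, 1)) p.2 := by
  have hl : HasDerivAt (fun t : ℝ => (p.1, t)) ((0 : ℝ), (1 : ℝ)) p.2 :=
    (hasDerivAt_const p.2 p.1).prodMk (hasDerivAt_id p.2)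
  have := ((hf p).hasFDerivAt).comp_hasDerivAt p.2 (by simpa using hl)
  exact this

lemma aniso_d1_eq (hf : ContDiff ℝ (⊤ : ℕ∞) f) :
    d1 f = fun p => fderiv ℝ f p (1, 0) :=
  funext fun p => (aniso_hasDerivAt_d1 (hf.differentiable (by simp)) p).deriv

lemma aniso_d2_eq (hf : ContDiff ℝ (⊤ : ℕ∞) f) :
    d2 f = fun p => fderiv ℝ f p (0, 1) :=
  funext fun p => (aniso_hasDerivAt_d2 (hf.differentiable (by simp)) p).deriv

lemma aniso_d1_contDiff (hf : ContDiff ℝ (⊤ : ℕ∞) f) : ContDiff ℝ (⊤ : ℕ∞) (d1 f) := by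
  rw [aniso_d1_eq hf]
  exact (hf.fderiv_right (by simp)).clm_apply contDiff_const

lemma aniso_d2_contDiff (hf : ContDiff ℝ (⊤ : ℕ∞) f) : ContDiff ℝ (⊤ : ℕ∞) (d2 f) := by
  rw [aniso_d2_eq hf]
  exact (hf.fderiv_right (by simp)).clm_apply contDiff_const

lemma aniso_d1_supp (hf : ContDiff ℝ (⊤ : ℕ∞) f) (hs : HasCompactSupport f) :
    HasCompactSupport (d1 f) := by
  rw [aniso_d1_eq hf]; exact hs.fderiv_apply ℝ (1, 0)

lemma aniso_d2_supp (hf : ContDiff ℝ (⊤ : ℕ∞) f) (hs : HasCompactSupport f) :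
    HasCompactSupport (d2 f) := by
  rw [aniso_d2_eq hf]; exact hs.fderiv_apply ℝ (0, 1)

lemma aniso_clairaut (hf : ContDiff ℝ (⊤ : ℕ∞) f) :
    d2 (d1 f) = d1 (d2 f) := by
  have hdiff : Differentiable ℝ (fderiv ℝ f) :=
    (hf.fderiv_right (m := (⊤ : ℕ∞)) (by simp)).differentiable (by simp)
  have key : ∀ (p : ℝ × ℝ) (v w : ℝ × ℝ),
      fderiv ℝ (fun q => fderiv ℝ f q v) p w = fderiv ℝ (fderiv ℝ f) p w v := by
    intro p v w
    have hev : HasFDerivAt (fun q => fderiv ℝ f q v)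
        ((ContinuousLinearMap.apply ℝ ℝ v).comp (fderiv ℝ (fderiv ℝ f) p)) p :=
      ((ContinuousLinearMap.apply ℝ ℝ v).hasFDerivAt).comp p (hdiff p).hasFDerivAt
    rw [hev.fderiv]; rfl
  have hsymm : ∀ p : ℝ × ℝ, ∀ v w, fderiv ℝ (fderiv ℝ f) p v w = fderiv ℝ (fderiv ℝ f) p w v :=
    fun p => (hf.contDiffAt.isSymmSndFDerivAt (by rw [minSmoothness_of_isRCLikeNormedField]; exact WithTop.coe_le_coe.mpr le_top))
  funext p
  rw [aniso_d2_eq (aniso_d1_contDiff hf), aniso_d1_eq (aniso_d2_contDiff hf)]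
  simp only [aniso_d1_eq hf, aniso_d2_eq hf]
  rw [key p (1,0) (0,1), key p (0,1) (1,0), hsymm p]

lemma aniso_sq_supp {α : Type*} [TopologicalSpace α] {g : α → ℝ} (h : HasCompactSupport g) :
    HasCompactSupport (fun x => g x ^ 2) := by
  apply h.mono
  intro x hx
  simp only [Function.mem_support] at hx ⊢
  exact fun h0 => hx (by rw [h0]; ring)

lemma aniso_slice1_contDiff (hf : ContDiff ℝ (⊤ : ℕ∞) f) (y : ℝ) :
    ContDiff ℝ (⊤ : ℕ∞) (fun s => f (s, y)) := hf.comp (contDiff_id.prodMk contDiff_const)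

lemma aniso_slice2_contDiff (hf : ContDiff ℝ (⊤ : ℕ∞) f) (s : ℝ) :
    ContDiff ℝ (⊤ : ℕ∞) (fun t => f (s, t)) := hf.comp (contDiff_const.prodMk contDiff_id)

lemma aniso_slice1_supp (hs : HasCompactSupport f) (y : ℝ) :
    HasCompactSupport (fun s => f (s, y)) := by
  obtain ⟨R, hR⟩ := hs.isBounded.subset_closedBall 0
  apply HasCompactSupport.intro (K := Metric.closedBall (0:ℝ) |R|) (isCompact_closedBall 0 |R|)
  intro s hsmem
  apply image_eq_zero_of_notMem_tsupport
  intro hmem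
  apply hsmem
  have := hR hmem
  rw [Metric.mem_closedBall] at this ⊢
  rw [Prod.dist_eq] at this
  exact le_trans (le_trans (le_max_left _ _) this) (le_abs_self R)

lemma aniso_slice2_supp (hs : HasCompactSupport f) (s : ℝ) :
    HasCompactSupport (fun t => f (s, t)) := by
  obtain ⟨R, hR⟩ := hs.isBounded.subset_closedBall 0
  apply HasCompactSupport.intro (K := Metric.closedBall (0:ℝ) |R|) (isCompact_closedBall 0 |R|)
  intro t htmem
  apply image_eq_zero_of_notMem_tsupport
  intro hmem
  apply htmem
  have := hR hmem
  rw [Metric.mem_closedBall] at this ⊢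
  rw [Prod.dist_eq] at this
  exact le_trans (le_trans (le_max_right _ _) this) (le_abs_self R)

/-- Step B: `∫ₛ h(s,y)² ds ≤ 2 ‖h‖₂ ‖∂₂h‖₂`. -/
lemma aniso_stepB (hf : ContDiff ℝ (⊤ : ℕ∞) f) (hs : HasCompactSupport f) (y : ℝ) :
    (∫ s, f (s, y) ^ 2) ≤
      2 * (Real.sqrt (∫ p : ℝ × ℝ, f p ^ 2) * Real.sqrt (∫ p : ℝ × ℝ, d2 f p ^ 2)) := by
  have hfc : Continuous f := hf.continuous
  have hd2c : Continuous (d2 f) := (aniso_d2_contDiff hf).continuous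
  have hd2s : HasCompactSupport (d2 f) := aniso_d2_supp hf hs
  set G : ℝ × ℝ → ℝ := fun p => 2 * |f p| * |d2 f p| with hG
  have hGc : Continuous G := by fun_prop
  have hGsupp : HasCompactSupport G := by
    apply hs.mono
    intro p hp
    simp only [Function.mem_support, hG] at hp ⊢
    intro h0; apply hp; rw [h0]; simp
  have hGint : Integrable G := hGc.integrable_of_hasCompactSupport hGsupp
  have hGprod : Integrable (fun z : ℝ × ℝ => G z) ((volume : Measure ℝ).prod volume) := by
    rw [← MeasureTheory.Measure.volume_eq_prod]; exact hGint
  have pt : ∀ s, f (s, y) ^ 2 ≤ ∫ t, G (s, t) := by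
    intro s
    have := aniso_key1d (aniso_slice2_contDiff hf s) (aniso_slice2_supp hs s) y
    simpa [hG, d2] using this
  have intA : Integrable (fun s => f (s, y) ^ 2) :=
    (by fun_prop : Continuous (fun s => f (s, y) ^ 2)).integrable_of_hasCompactSupport
      (aniso_sq_supp (aniso_slice1_supp hs y))
  have intB : Integrable (fun s => ∫ t, G (s, t)) := hGprod.integral_prod_left
  calc (∫ s, f (s, y) ^ 2) ≤ ∫ s, ∫ t, G (s, t) :=
        integral_mono intA intB pt
    _ = ∫ z : ℝ × ℝ, G z := by
        rw [MeasureTheory.integral_integral hGprod, ← MeasureTheory.Measure.volume_eq_prod]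
    _ = 2 * ∫ z : ℝ × ℝ, |f z| * |d2 f z| := by
        simp_rw [hG, mul_assoc]
        rw [integral_const_mul]
    _ ≤ 2 * (Real.sqrt (∫ p : ℝ × ℝ, f p ^ 2) * Real.sqrt (∫ p : ℝ × ℝ, d2 f p ^ 2)) := by
        have := aniso_cs (μ := (volume : Measure (ℝ × ℝ)))
          (hfc.memLp_of_hasCompactSupport hs)
          (hd2c.memLp_of_hasCompactSupport hd2s)
        linarith

end Aux

/-- Anisotropic `L^∞` inequality:
`‖f‖_{L^∞} ≤ C ‖f‖_{L²}^{1/4} ‖∂₁f‖_{L²}^{1/4} ‖∂₂f‖_{L²}^{1/4} ‖∂₁∂₂f‖_{L²}^{1/4}`. -/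
theorem anisotropic_Linfty :
    ∃ C : ℝ, 0 < C ∧ ∀ f : ℝ × ℝ → ℝ, ContDiff ℝ (⊤ : ℕ∞) f → HasCompactSupport f →
      ∀ p : ℝ × ℝ, |f p| ≤ C * L2n f ^ ((1 : ℝ)/4) * L2n (d1 f) ^ ((1 : ℝ)/4)
        * L2n (d2 f) ^ ((1 : ℝ)/4) * L2n (d1 (d2 f)) ^ ((1 : ℝ)/4) := by
  refine ⟨2, by norm_num, fun f hf hs p => ?_⟩
  obtain ⟨x, y⟩ := p
  have hd1 := aniso_d1_contDiff hf
  have hd1s := aniso_d1_supp hf hs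
  set N0 := Real.sqrt (∫ p : ℝ × ℝ, f p ^ 2) with hN0
  set N1 := Real.sqrt (∫ p : ℝ × ℝ, d1 f p ^ 2) with hN1
  set N2 := Real.sqrt (∫ p : ℝ × ℝ, d2 f p ^ 2) with hN2
  set N12 := Real.sqrt (∫ p : ℝ × ℝ, d1 (d2 f) p ^ 2) with hN12
  have hN0' : 0 ≤ N0 := Real.sqrt_nonneg _
  have hN1' : 0 ≤ N1 := Real.sqrt_nonneg _
  have hN2' : 0 ≤ N2 := Real.sqrt_nonneg _
  have hN12' : 0 ≤ N12 := Real.sqrt_nonneg _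
  -- step A : f(x,y)² ≤ 2 √A √B
  set A := ∫ s, f (s, y) ^ 2 with hA
  set B := ∫ s, d1 f (s, y) ^ 2 with hB
  have hA0 : 0 ≤ A := integral_nonneg fun s => sq_nonneg _
  have hB0 : 0 ≤ B := integral_nonneg fun s => sq_nonneg _
  have stepA : f (x, y) ^ 2 ≤ 2 * (Real.sqrt A * Real.sqrt B) := by
    have h1 : f (x, y) ^ 2 ≤ ∫ s, 2 * |f (s, y)| * |d1 f (s, y)| := by
      have := aniso_key1d (aniso_slice1_contDiff hf y) (aniso_slice1_supp hs y) x
      simpa [d1] using this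
    have h2 : (∫ s, 2 * |f (s, y)| * |d1 f (s, y)|) = 2 * ∫ s, |f (s, y)| * |d1 f (s, y)| := by
      simp_rw [mul_assoc]; rw [integral_const_mul]
    have h3 : (∫ s, |f (s, y)| * |d1 f (s, y)|) ≤ Real.sqrt A * Real.sqrt B := by
      apply aniso_cs
      · exact ((aniso_slice1_contDiff hf y).continuous).memLp_of_hasCompactSupport
          (aniso_slice1_supp hs y)
      · exact ((aniso_slice1_contDiff hd1 y).continuous).memLp_of_hasCompactSupport
          (aniso_slice1_supp hd1s y)
    calc f (x, y) ^ 2 ≤ 2 * ∫ s, |f (s, y)| * |d1 f (s, y)| := by rw [← h2]; exact h1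
      _ ≤ 2 * (Real.sqrt A * Real.sqrt B) := by linarith
  have hAle : A ≤ 2 * (N0 * N2) := aniso_stepB hf hs y
  have hBle : B ≤ 2 * (N1 * N12) := by
    have := aniso_stepB hd1 hd1s y
    rwa [aniso_clairaut hf] at this
  -- combine
  have h4 : f (x, y) ^ 4 ≤ 16 * (N0 * N1 * N2 * N12) := by
    have hsq : (f (x, y) ^ 2) ^ 2 ≤ (2 * (Real.sqrt A * Real.sqrt B)) ^ 2 :=
      pow_le_pow_left₀ (sq_nonneg _) stepA 2
    have he : (2 * (Real.sqrt A * Real.sqrt B)) ^ 2 = 4 * (A * B) := by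
      rw [mul_pow, mul_pow, Real.sq_sqrt hA0, Real.sq_sqrt hB0]; ring
    have hab : A * B ≤ (2 * (N0 * N2)) * (2 * (N1 * N12)) :=
      mul_le_mul hAle hBle hB0 (by positivity)
    calc f (x, y) ^ 4 = (f (x, y) ^ 2) ^ 2 := by ring
      _ ≤ 4 * (A * B) := by rw [← he]; exact hsq
      _ ≤ 4 * ((2 * (N0 * N2)) * (2 * (N1 * N12))) := by linarith
      _ = 16 * (N0 * N1 * N2 * N12) := by ring
  -- conclude
  have hL0 : L2n f = N0 := by rw [L2n, hN0, Real.sqrt_eq_rpow]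
  have hL1 : L2n (d1 f) = N1 := by rw [L2n, hN1, Real.sqrt_eq_rpow]
  have hL2 : L2n (d2 f) = N2 := by rw [L2n, hN2, Real.sqrt_eq_rpow]
  have hL12 : L2n (d1 (d2 f)) = N12 := by rw [L2n, hN12, Real.sqrt_eq_rpow]
  rw [hL0, hL1, hL2, hL12]
  have rid : ∀ N : ℝ, 0 ≤ N → (N ^ ((1:ℝ)/4)) ^ (4:ℕ) = N := by
    intro N hN
    rw [← Real.rpow_natCast (N ^ ((1:ℝ)/4)) 4, ← Real.rpow_mul hN]
    norm_num
  apply le_of_pow_le_pow_left₀ (n := 4) (by norm_num)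
  · positivity
  calc |f (x, y)| ^ 4 = f (x, y) ^ 4 := by rw [← abs_pow, abs_of_nonneg (by positivity)]
    _ ≤ 16 * (N0 * N1 * N2 * N12) := h4
    _ = (2 * N0 ^ ((1:ℝ)/4) * N1 ^ ((1:ℝ)/4) * N2 ^ ((1:ℝ)/4) * N12 ^ ((1:ℝ)/4)) ^ (4:ℕ) := by
        rw [mul_pow, mul_pow, mul_pow, mul_pow, rid N0 hN0', rid N1 hN1', rid N2 hN2',
          rid N12 hN12']
        norm_num; ring
end
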